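/- There is no acyclic Boolean conjunctive query equivalent, over all databases satisfying the TGD set T_{⊠} = {L(x₃,x₄), S(x₁,x₃), R(x₃,x₂), B(x₁,x₂) → T(x₃,x₄); L(x₃,x₄), S(x₁,x₃), R(x₃,x₂), T(x₃,x₄) → B(x₁,x₂)}, to the Boolean CQ q_{⊠}() ← B(x₁,x₂), R(x₃,x₂), T(x₃,x₄), L(x₁,x₄), S(x₁,x₃). -/

import Mathlib

/-!
Both TGDs contain the body atoms `L(x₃,x₄), S(x₁,x₃)`, which have no match in `q_⊠`, so every
instance with a homomorphism to `q_⊠` satisfies them vacuously. Evaluating an equivalent `q` on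
the canonical instances of `q_⊠` and of `q` therefore yields homomorphisms `q → q_⊠` and
`q_⊠ → q`. The images of `x₁, x₂, x₃` in `q` then pairwise share an atom (the images of
`B`, `R`, `S`), while no atom of `q` contains all three. In a join tree the atoms containing a
given variable form a subtree, and subtrees of a tree have the Helly property, so `q` is cyclic.
-/

/-- A relational instance over schema `σ` with domain `α`: a set of facts. -/
abbrev Inst (σ α : Type) := Set (σ × List α)

/-- `h` is a homomorphism from instance `D` to instance `E`. -/
def IsHom {σ α β : Type} (D : Inst σ α) (E : Inst σ β) (h : α → β) : Prop :=
  ∀ R as, (R, as) ∈ D → (R, as.map h) ∈ E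

/-- The active domain of an instance. -/
def activeDom {σ α : Type} (D : Inst σ α) : Set α :=
  {a | ∃ R as, (R, as) ∈ D ∧ a ∈ as}

/-- Variables occurring in a set of atoms (atoms use natural numbers as variables). -/
def varsOf {σ : Type} (S : Set (σ × List ℕ)) : Set ℕ :=
  {x | ∃ R as, (R, as) ∈ S ∧ x ∈ as}

/-- A tuple-generating dependency: body and head are sets of relational atoms. -/
structure TGD (σ : Type) where
  body : Set (σ × List ℕ)
  head : Set (σ × List ℕ)

/-- Frontier variables: variables shared by body and head. -/
def TGD.frontier {σ : Type} (t : TGD σ) : Set ℕ := varsOf t.body ∩ varsOf t.head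

/-- `D` satisfies the TGD `t`. -/
def Satisfies {σ α : Type} (D : Inst σ α) (t : TGD σ) : Prop :=
  ∀ h : ℕ → α, IsHom t.body D h →
    ∃ g : ℕ → α, (∀ x ∈ t.frontier, g x = h x) ∧ IsHom t.head D g

/-- A conjunctive query: a set of atoms and a list of answer variables. -/
structure CQ (σ : Type) where
  atoms : Set (σ × List ℕ)
  ansVars : List ℕ

/-- The set of answers to a CQ on an instance. -/
def CQ.Ans {σ α : Type} (q : CQ σ) (D : Inst σ α) : Set (List α) :=
  {c | ∃ h : ℕ → α, IsHom q.atoms D h ∧ q.ansVars.map h = c}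

/-- `q` is acyclic: its atoms admit a join tree, i.e. a tree whose nodes are
the atoms such that the atoms containing any given variable form a connected
subtree. -/
def AcyclicCQ {σ : Type} (q : CQ σ) : Prop :=
  ∃ G : SimpleGraph q.atoms, G.IsTree ∧
    ∀ (x : ℕ) (a b : q.atoms), x ∈ a.val.2 → x ∈ b.val.2 →
      ∃ p : G.Walk a b, ∀ c ∈ p.support, x ∈ c.val.2

/-- The schema of the example: five binary relation symbols. -/
inductive S5 : Type where
  | B | R | T | L | S
deriving DecidableEq

/-- The Boolean CQ q() ← B(x₁,x₂), R(x₃,x₂), T(x₃,x₄), L(x₁,x₄), S(x₁,x₃). -/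
def qbox : CQ S5 where
  atoms := {(S5.B, [1, 2]), (S5.R, [3, 2]), (S5.T, [3, 4]), (S5.L, [1, 4]), (S5.S, [1, 3])}
  ansVars := []

/-- The TGD L(x₃,x₄), S(x₁,x₃), R(x₃,x₂), B(x₁,x₂) → T(x₃,x₄). -/
def Ttop : TGD S5 where
  body := {(S5.L, [3, 4]), (S5.S, [1, 3]), (S5.R, [3, 2]), (S5.B, [1, 2])}
  head := {(S5.T, [3, 4])}

/-- The TGD L(x₃,x₄), S(x₁,x₃), R(x₃,x₂), T(x₃,x₄) → B(x₁,x₂). -/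
def Tbot : TGD S5 where
  body := {(S5.L, [3, 4]), (S5.S, [1, 3]), (S5.R, [3, 2]), (S5.T, [3, 4])}
  head := {(S5.B, [1, 2])}

namespace SimpleGraph

variable {V : Type*} {G : SimpleGraph V}

def PreconnectedOn (G : SimpleGraph V) (s : Set V) : Prop :=
  ∀ u ∈ s, ∀ v ∈ s, ∃ p : G.Walk u v, ∀ x ∈ p.support, x ∈ s

/-- By uniqueness of paths, `p` is the bypass of a walk inside `s`. -/
lemma IsAcyclic.mem_of_mem_support_of_isPath (hG : G.IsAcyclic) {s : Set V}
    (hs : G.PreconnectedOn s) {u v : V} (hu : u ∈ s) (hv : v ∈ s) {p : G.Walk u v}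
    (hp : p.IsPath) : ∀ x ∈ p.support, x ∈ s := by
  classical
  obtain ⟨w, hw⟩ := hs u hu v hv
  have hpw : p = w.bypass :=
    congrArg Subtype.val <| (hG.subsingleton_path u v).elim ⟨p, hp⟩ ⟨w.bypass, w.bypass_isPath⟩
  exact fun x hx => hw x (w.support_bypass_subset_support (hpw ▸ hx))

/-- Helly property for three subtrees of a forest. -/
theorem IsAcyclic.nonempty_inter_inter_of_preconnectedOn (hG : G.IsAcyclic) {A B C : Set V}
    (hA : G.PreconnectedOn A) (hB : G.PreconnectedOn B) (hC : G.PreconnectedOn C)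
    (hAB : (A ∩ B).Nonempty) (hBC : (B ∩ C).Nonempty) (hCA : (C ∩ A).Nonempty) :
    (A ∩ B ∩ C).Nonempty := by
  classical
  obtain ⟨u, huA, huB⟩ := hAB
  obtain ⟨v, hvB, hvC⟩ := hBC
  obtain ⟨w, hwC, hwA⟩ := hCA
  by_cases hvA : v ∈ A
  · exact ⟨v, ⟨hvA, hvB⟩, hvC⟩
  obtain ⟨pA, hpA⟩ := hA w hwA u huA
  obtain ⟨pB, hpB⟩ := hB u huB v hvB
  -- the path from `w` to `v` lies in `C` and, running through `u`, in `A ∪ B`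
  set r : G.Walk w v := (pA.append pB).bypass
  have hrC : ∀ x ∈ r.support, x ∈ C :=
    hG.mem_of_mem_support_of_isPath hC hwC hvC (pA.append pB).bypass_isPath
  have hrAB : ∀ x ∈ r.support, x ∈ A ∨ x ∈ B := fun x hx => by
    rcases (Walk.mem_support_append_iff _ _).1 ((pA.append pB).support_bypass_subset_support hx)
      with h | h
    exacts [.inl (hpA x h), .inr (hpB x h)]
  obtain ⟨d, hd, hdA, hd'A⟩ := r.exists_boundary_dart A hwA hvA
  have hm := r.dart_fst_mem_support_of_mem_darts hd
  have hm' := r.dart_snd_mem_support_of_mem_darts hd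
  have hm'B : d.snd ∈ B := (hrAB _ hm').resolve_left hd'A
  -- leaving `A` along the edge `d`, the path from `u` to `d.snd` must come back through `d.fst`
  obtain ⟨pm, -⟩ := hA u huA _ hdA
  obtain ⟨pm', -⟩ := hB u huB _ hm'B
  have hmB : d.fst ∈ B := by
    refine hG.mem_of_mem_support_of_isPath hB huB hm'B pm'.bypass_isPath _ ?_
    by_contra hm
    exact hd'A <| hG.mem_of_mem_support_of_isPath hA huA hdA pm.bypass_isPath _ <|
      hG.mem_support_of_ne_mem_support_of_adj_of_isPath pm.bypass_isPath pm'.bypass_isPath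
        d.adj hm
  exact ⟨d.fst, ⟨hdA, hmB⟩, hrC _ hm⟩

end SimpleGraph

theorem AcyclicCQ.exists_atom_of_pairwise {σ : Type} {q : CQ σ} (hq : AcyclicCQ q) {x y z : ℕ}
    (hxy : ∃ a ∈ q.atoms, x ∈ a.2 ∧ y ∈ a.2) (hyz : ∃ a ∈ q.atoms, y ∈ a.2 ∧ z ∈ a.2)
    (hzx : ∃ a ∈ q.atoms, z ∈ a.2 ∧ x ∈ a.2) :
    ∃ a ∈ q.atoms, x ∈ a.2 ∧ y ∈ a.2 ∧ z ∈ a.2 := by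
  obtain ⟨G, hG, hconn⟩ := hq
  have hpre (x : ℕ) : G.PreconnectedOn {a | x ∈ a.val.2} := fun a ha b hb => hconn x a b ha hb
  have hmeet {x y : ℕ} : (∃ a ∈ q.atoms, x ∈ a.2 ∧ y ∈ a.2) →
      ({a : q.atoms | x ∈ a.val.2} ∩ {a | y ∈ a.val.2}).Nonempty :=
    fun ⟨a, ha, hx, hy⟩ => ⟨⟨a, ha⟩, hx, hy⟩
  obtain ⟨a, ⟨hx, hy⟩, hz⟩ := hG.isAcyclic.nonempty_inter_inter_of_preconnectedOn
    (hpre x) (hpre y) (hpre z) (hmeet hxy) (hmeet hyz) (hmeet hzx)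
  exact ⟨a.val, a.prop, hx, hy, hz⟩

section Hom

variable {σ α β γ : Type}

lemma isHom_id (D : Inst σ α) : IsHom D D id := fun R as h => by simpa using h

lemma IsHom.comp {D : Inst σ α} {E : Inst σ β} {F : Inst σ γ} {g : β → γ} {f : α → β}
    (hg : IsHom E F g) (hf : IsHom D E f) : IsHom D F (g ∘ f) :=
  fun R as h => by simpa using hg R _ (hf R as h)

lemma Satisfies.of_isHom_of_forall_not_isHom {D : Inst σ α} {E : Inst σ β} {t : TGD σ}
    {f : α → β} (hf : IsHom D E f) (ht : ∀ k, ¬ IsHom t.body E k) : Satisfies D t :=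
  fun _ hk => absurd (hf.comp hk) (ht _)

end Hom

lemma qbox_atoms_finite : (qbox.atoms : Inst S5 ℕ).Finite := by
  simp only [qbox]
  exact (Set.finite_singleton _).insert _ |>.insert _ |>.insert _ |>.insert _

lemma qbox_not_L_S_join {x y z : ℕ} (hL : (S5.L, [x, y]) ∈ qbox.atoms) :
    (S5.S, [z, x]) ∉ qbox.atoms := by
  simp_all [qbox]

lemma not_isHom_Ttop_body_qbox (k : ℕ → ℕ) : ¬ IsHom Ttop.body qbox.atoms k := fun hk =>
  qbox_not_L_S_join (hk _ [3, 4] (by simp [Ttop])) (hk _ [1, 3] (by simp [Ttop]))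

lemma not_isHom_Tbot_body_qbox (k : ℕ → ℕ) : ¬ IsHom Tbot.body qbox.atoms k := fun hk =>
  qbox_not_L_S_join (hk _ [3, 4] (by simp [Tbot])) (hk _ [1, 3] (by simp [Tbot]))

lemma eq_of_isHom_qbox_qbox {k : ℕ → ℕ} (hk : IsHom qbox.atoms qbox.atoms k) :
    k 1 = 1 ∧ k 2 = 2 ∧ k 3 = 3 := by
  have hB := hk S5.B [1, 2] (by simp [qbox])
  have hR := hk S5.R [3, 2] (by simp [qbox])
  simp_all [qbox]

lemma qbox_atom_not_contains_one_two_three {P : S5} {l : List ℕ} (hl : (P, l) ∈ qbox.atoms)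
    (h1 : 1 ∈ l) (h2 : 2 ∈ l) (h3 : 3 ∈ l) : False := by
  simp only [qbox, Set.mem_insert_iff, Set.mem_singleton_iff, Prod.mk.injEq] at hl
  rcases hl with ⟨-, rfl⟩ | ⟨-, rfl⟩ | ⟨-, rfl⟩ | ⟨-, rfl⟩ | ⟨-, rfl⟩ <;> simp_all

theorem not_acyclicCQ_of_isHom_qbox {q : CQ S5} {f g : ℕ → ℕ}
    (hg : IsHom qbox.atoms q.atoms g) (hf : IsHom q.atoms qbox.atoms f) : ¬ AcyclicCQ q := by
  intro hq
  obtain ⟨hf1, hf2, hf3⟩ : f (g 1) = 1 ∧ f (g 2) = 2 ∧ f (g 3) = 3 :=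
    eq_of_isHom_qbox_qbox (hf.comp hg)
  obtain ⟨⟨P, l⟩, hl, h1, h2, h3⟩ := hq.exists_atom_of_pairwise (x := g 1) (y := g 2) (z := g 3)
    ⟨_, hg S5.B [1, 2] (by simp [qbox]), by simp, by simp⟩
    ⟨_, hg S5.R [3, 2] (by simp [qbox]), by simp, by simp⟩
    ⟨_, hg S5.S [1, 3] (by simp [qbox]), by simp, by simp⟩
  exact qbox_atom_not_contains_one_two_three (hf P l hl) (hf1 ▸ List.mem_map_of_mem h1)
    (hf2 ▸ List.mem_map_of_mem h2) (hf3 ▸ List.mem_map_of_mem h3)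

/-- There is no acyclic Boolean CQ that is equivalent to `qbox` on all
databases satisfying the two TGDs `Ttop` and `Tbot`. -/
theorem stmt14 :
    ¬ ∃ q : CQ S5, q.atoms.Finite ∧ AcyclicCQ q ∧ q.ansVars = [] ∧
      ∀ D : Inst S5 ℕ, D.Finite → Satisfies D Ttop → Satisfies D Tbot →
        ((∃ h : ℕ → ℕ, IsHom q.atoms D h) ↔ (∃ h : ℕ → ℕ, IsHom qbox.atoms D h)) := by
  rintro ⟨q, hfin, hq, -, hequiv⟩
  have hsat {D : Inst S5 ℕ} {f : ℕ → ℕ} (hf : IsHom D qbox.atoms f) :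
      Satisfies D Ttop ∧ Satisfies D Tbot :=
    ⟨.of_isHom_of_forall_not_isHom hf not_isHom_Ttop_body_qbox,
      .of_isHom_of_forall_not_isHom hf not_isHom_Tbot_body_qbox⟩
  obtain ⟨f, hf⟩ := (hequiv qbox.atoms qbox_atoms_finite (hsat (isHom_id _)).1
    (hsat (isHom_id _)).2).2 ⟨id, isHom_id _⟩
  obtain ⟨g, hg⟩ := (hequiv q.atoms hfin (hsat hf).1 (hsat hf).2).1 ⟨id, isHom_id _⟩
  exact not_acyclicCQ_of_isHom_qbox hg hf hq
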